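/- Let G = (V, E) be a graph with a linear order < on E. Then the chromatic polynomial of G satisfies χ(G, x) = (−1)^{|V|} (−x)^{k(G)} Σ_{F spanning forest of G with e(F) = 0} (1 − x)^{i(F)}, where the sum runs over all spanning forests of G having no externally active edge, i(F) is the number of internally active edges of F, and k(G) is the number of connected components of G. -/

import Mathlib

open Finset

attribute [local instance] Classical.propDecidable

/-- A multigraph on vertex type `V` with edge index type `E` is given by a map
`ends : E → Sym2 V` (loops and parallel edges are allowed).  For an edge subset
`A ⊆ E`, `edgeGraph ends A` is the simple graph on `V` whose adjacency is
witnessed by some edge of `A`; it determines the connected components of the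
spanning subgraph `(V, A)`. -/
def edgeGraph {V E : Type} (ends : E → Sym2 V) (A : Finset E) : SimpleGraph V where
  Adj a b := a ≠ b ∧ ∃ e ∈ A, ends e = s(a, b)
  symm := by
    constructor
    rintro a b ⟨hab, e, he, hs⟩
    exact ⟨Ne.symm hab, e, he, by rw [hs, Sym2.eq_swap]⟩
  loopless := by constructor; rintro a ⟨h, -⟩; exact h rfl

/-- `kc ends A` is the number of connected components of the spanning subgraph `(V, A)`. -/
noncomputable def kc {V E : Type} (ends : E → Sym2 V) (A : Finset E) : ℕ :=
  Nat.card (edgeGraph ends A).ConnectedComponent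

/-- `(V, A)` is a spanning forest of `(V, E)`: it is a forest
(`|A| + k((V,A)) = |V|`, which rules out loops, parallel edges and cycles)
with as many connected components as the whole graph. -/
def IsSpanningForest {V E : Type} [Fintype V] [Fintype E] (ends : E → Sym2 V)
    (A : Finset E) : Prop :=
  A.card + kc ends A = Fintype.card V ∧ kc ends A = kc ends Finset.univ

/-- `F - e + f`. -/
def swapEdge {E : Type} [DecidableEq E] (A : Finset E) (e f : E) : Finset E :=
  insert f (A.erase e)

/-- `e` is internally active in the spanning forest `(V, A)`. -/
def InternallyActive {V E : Type} [Fintype V] [Fintype E] [DecidableEq E] [LinearOrder E]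
    (ends : E → Sym2 V) (A : Finset E) (e : E) : Prop :=
  e ∈ A ∧ ¬ ∃ f, f ∉ A ∧ e < f ∧ IsSpanningForest ends (swapEdge A e f)

/-- `f` is externally active in the spanning forest `(V, A)`. -/
def ExternallyActive {V E : Type} [Fintype V] [Fintype E] [DecidableEq E] [LinearOrder E]
    (ends : E → Sym2 V) (A : Finset E) (f : E) : Prop :=
  f ∉ A ∧ ¬ ∃ e, e ∈ A ∧ f < e ∧ IsSpanningForest ends (swapEdge A e f)

/-- The set `E_i(F)` of internally active edges of the spanning forest `F = (V, A)`. -/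
noncomputable def intAct {V E : Type} [Fintype V] [Fintype E] [DecidableEq E] [LinearOrder E]
    (ends : E → Sym2 V) (A : Finset E) : Finset E :=
  Finset.univ.filter (InternallyActive ends A)

/-- The set `E_e(F)` of externally active edges of the spanning forest `F = (V, A)`. -/
noncomputable def extAct {V E : Type} [Fintype V] [Fintype E] [DecidableEq E] [LinearOrder E]
    (ends : E → Sym2 V) (A : Finset E) : Finset E :=
  Finset.univ.filter (ExternallyActive ends A)

/-- Number of proper colorings of the multigraph `(V, ends)` with `n` colors. -/
noncomputable def chromCount {V E : Type} [Fintype V] [Fintype E] (ends : E → Sym2 V)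
    (n : ℕ) : ℕ :=
  Nat.card {c : V → Fin n // ∀ e : E, ∀ a b : V, ends e = s(a, b) → c a ≠ c b}

/-!
Expand `χ` by the edge-subset formula `χ(G, x) = ∑_A (-1)^|A| x^k(A)`. The edge subsets are
partitioned (after Crapo) into the intervals `[F \ IA(F), F ∪ EA(F)]` of the spanning forests
`F`, where `IA` and `EA` are the internally and externally active edges: the forest whose interval
contains `A` is the greedy spanning forest that scans the edges of `A` increasingly and then the
remaining edges decreasingly. On the interval of `F` every externally active edge is spanned by
`A ∩ F`, so `k(A) = k(G) + |F \ A|`, and the interval contributes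
`(-1)^(|F| - i(F)) x^k(G) (x - 1)^i(F) 0^e(F)`, which vanishes unless `e(F) = 0`.
-/

theorem Sym2.exists_eq_mk {α : Type} (z : Sym2 α) : ∃ a b, z = s(a, b) :=
  ⟨_, _, (Quot.out_eq z).symm⟩

namespace SimpleGraph

variable {V : Type} {G : SimpleGraph V}

theorem Reachable.of_forall_adj {r : V → V → Prop} (hr : Equivalence r)
    (h : ∀ u v, G.Adj u v → r u v) {u v : V} (huv : G.Reachable u v) : r u v := by
  obtain ⟨p⟩ := huv
  induction p with
  | nil => exact hr.refl _
  | cons hadj _ ih => exact hr.trans (h _ _ hadj) ih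

theorem Reachable.of_sup_edge {a b u v : V} (huv : (G ⊔ edge a b).Reachable u v) :
    G.Reachable u v ∨ (G.Reachable u a ∧ G.Reachable b v) ∨
      (G.Reachable u b ∧ G.Reachable a v) := by
  obtain ⟨p⟩ := huv
  induction p with
  | nil => exact .inl .rfl
  | @cons u w v hadj _ ih =>
    rcases hadj with hadj | hadj
    · have := hadj.reachable
      rcases ih with h | ⟨h₁, h₂⟩ | ⟨h₁, h₂⟩
      exacts [.inl (this.trans h), .inr (.inl ⟨this.trans h₁, h₂⟩),
        .inr (.inr ⟨this.trans h₁, h₂⟩)]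
    · obtain ⟨⟨rfl, rfl⟩ | ⟨rfl, rfl⟩, -⟩ := (edge_adj _ _ _ _).1 hadj
      · rcases ih with h | ⟨h₁, h₂⟩ | ⟨h₁, h₂⟩
        exacts [.inr (.inl ⟨.rfl, h⟩), .inl (h₁.symm.trans h₂), .inl h₂]
      · rcases ih with h | ⟨h₁, h₂⟩ | ⟨h₁, h₂⟩
        exacts [.inr (.inr ⟨.rfl, h⟩), .inl h₂, .inl (h₁.symm.trans h₂)]

theorem card_connectedComponent_sup_edge_of_reachable {a b : V} (hab : G.Reachable a b) :
    Nat.card (G ⊔ edge a b).ConnectedComponent = Nat.card G.ConnectedComponent := by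
  refine (Nat.card_eq_of_bijective _ ⟨fun C D hCD => ?_,
    ConnectedComponent.surjective_map_ofLE le_sup_left⟩).symm
  induction C using ConnectedComponent.ind with | h u =>
  induction D using ConnectedComponent.ind with | h v =>
  refine ConnectedComponent.sound ((ConnectedComponent.exact hCD).of_forall_adj
    (reachable_is_equivalence G) fun x y hxy => ?_)
  rcases hxy with hxy | hxy
  · exact hxy.reachable
  · obtain ⟨⟨rfl, rfl⟩ | ⟨rfl, rfl⟩, -⟩ := (edge_adj _ _ _ _).1 hxy
    exacts [hab, hab.symm]

variable [Finite V]

theorem card_connectedComponent_sup_edge_lt {a b : V} (hab : ¬G.Reachable a b) :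
    Nat.card (G ⊔ edge a b).ConnectedComponent < Nat.card G.ConnectedComponent := by
  have : Fintype G.ConnectedComponent := Fintype.ofFinite _
  have : Fintype (G ⊔ edge a b).ConnectedComponent := Fintype.ofFinite _
  have hne : a ≠ b := by rintro rfl; exact hab .rfl
  simp only [Nat.card_eq_fintype_card]
  refine Fintype.card_lt_of_surjective_not_injective _
    (ConnectedComponent.surjective_map_ofLE le_sup_left) fun hinj => hab ?_
  refine ConnectedComponent.exact (hinj (ConnectedComponent.sound ?_))
  exact Adj.reachable (.inr ((edge_adj _ _ _ _).2 ⟨.inl ⟨rfl, rfl⟩, hne⟩))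

theorem card_connectedComponent_le_sup_edge_add_one (a b : V) :
    Nat.card G.ConnectedComponent ≤ Nat.card (G ⊔ edge a b).ConnectedComponent + 1 := by
  let φ := ConnectedComponent.map (Hom.ofLE (le_sup_left : G ≤ G ⊔ edge a b))
  let g (C : G.ConnectedComponent) : (G ⊔ edge a b).ConnectedComponent ⊕ Unit :=
    if C = G.connectedComponentMk a then .inr () else .inl (φ C)
  have hg : Function.Injective g := by
    intro C D hCD
    induction C using ConnectedComponent.ind with | h u =>
    induction D using ConnectedComponent.ind with | h v =>
    by_cases hu : G.connectedComponentMk u = G.connectedComponentMk a <;>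
      by_cases hv : G.connectedComponentMk v = G.connectedComponentMk a <;>
      simp only [g, hu, hv, if_true, if_false, reduceCtorEq, Sum.inl.injEq] at hCD
    · rw [hu, hv]
    · simp only [ConnectedComponent.eq] at hu hv ⊢
      rcases (ConnectedComponent.exact hCD).of_sup_edge with h | ⟨h, -⟩ | ⟨-, h⟩
      exacts [h, absurd h hu, absurd h.symm hv]
  simpa [Nat.card_sum] using Nat.card_le_card_of_injective g hg

theorem card_fun_const_on_adj {α : Type} (G : SimpleGraph V) :
    Nat.card {c : V → α // ∀ u v, G.Adj u v → c u = c v} =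
      Nat.card α ^ Nat.card G.ConnectedComponent := by
  rw [← Nat.card_fun]
  exact Nat.card_congr
    { toFun := fun c => Quot.lift c.1 fun _ _ huv =>
        huv.of_forall_adj (r := fun u v => c.1 u = c.1 v) ⟨fun _ => rfl, Eq.symm, Eq.trans⟩ c.2
      invFun := fun g => ⟨g ∘ G.connectedComponentMk, fun _ _ huv =>
        congrArg g (ConnectedComponent.sound huv.reachable)⟩
      left_inv := fun _ => rfl
      right_inv := fun g => funext fun C => by
        induction C using ConnectedComponent.ind; rfl }

end SimpleGraph

section EdgeSubsets

variable {V E : Type} {ends : E → Sym2 V}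

theorem edgeGraph_mono : Monotone (edgeGraph ends) :=
  fun _ _ h _ _ ⟨hne, e, he, hs⟩ => ⟨hne, e, h he, hs⟩

theorem kc_antitone [Finite V] : Antitone (kc ends) :=
  fun _ _ h => SimpleGraph.ConnectedComponent.card_le_card_of_le (edgeGraph_mono h)

theorem edgeGraph_empty : edgeGraph ends ∅ = ⊥ := by
  ext; simp [edgeGraph]

theorem edgeGraph_insert [DecidableEq E] {A : Finset E} {f : E} {a b : V}
    (hf : ends f = s(a, b)) :
    edgeGraph ends (insert f A) = edgeGraph ends A ⊔ SimpleGraph.edge a b := by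
  ext u v
  simp only [edgeGraph, SimpleGraph.sup_adj, SimpleGraph.edge_adj, exists_mem_insert, hf,
    Sym2.eq_iff]
  grind

theorem kc_empty [Fintype V] : kc ends ∅ = Fintype.card V := by
  rw [kc, edgeGraph_empty, ← Nat.card_eq_fintype_card]
  exact (Nat.card_eq_of_bijective _ ⟨fun u v h => SimpleGraph.reachable_bot.1
    (SimpleGraph.ConnectedComponent.exact h), fun C => C.ind fun v => ⟨v, rfl⟩⟩).symm

def Spans (ends : E → Sym2 V) (A : Finset E) (f : E) : Prop :=
  ∀ a b, ends f = s(a, b) → (edgeGraph ends A).Reachable a b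

theorem Spans.mono {A B : Finset E} {f : E} (h : A ⊆ B) (hA : Spans ends A f) :
    Spans ends B f :=
  fun a b hf => (hA a b hf).mono (edgeGraph_mono h)

theorem spans_of_mem {A : Finset E} {f : E} (hf : f ∈ A) : Spans ends A f := by
  intro a b hab
  by_cases hne : a = b
  · exact hne ▸ .rfl
  · exact SimpleGraph.Adj.reachable ⟨hne, f, hf, hab⟩

theorem Spans.trans {S T : Finset E} {f : E} (hST : ∀ e ∈ T, Spans ends S e)
    (hf : Spans ends T f) : Spans ends S f := by
  refine fun a b hab => (hf a b hab).of_forall_adj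
    (SimpleGraph.reachable_is_equivalence _) fun u v huv => ?_
  obtain ⟨-, e, he, hs⟩ := huv
  exact hST e he u v hs

variable [DecidableEq E]

theorem kc_insert_of_spans {A : Finset E} {f : E} (h : Spans ends A f) :
    kc ends (insert f A) = kc ends A := by
  obtain ⟨a, b, hab⟩ := (ends f).exists_eq_mk
  rw [kc, kc, edgeGraph_insert hab]
  exact SimpleGraph.card_connectedComponent_sup_edge_of_reachable (h a b hab)

theorem kc_union_of_spans {A S : Finset E} (h : ∀ f ∈ S, Spans ends A f) :
    kc ends (A ∪ S) = kc ends A := by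
  induction S using Finset.induction with
  | empty => rw [union_empty]
  | insert x S _ ih =>
    rw [union_insert, kc_insert_of_spans
      ((h x (mem_insert_self x S)).mono subset_union_left),
      ih fun f hf => h f (mem_insert_of_mem hf)]

variable [Finite V]

theorem kc_insert_add_one_of_not_spans {A : Finset E} {f : E} (h : ¬Spans ends A f) :
    kc ends (insert f A) + 1 = kc ends A := by
  obtain ⟨a, b, hab, hr⟩ :
      ∃ a b, ends f = s(a, b) ∧ ¬(edgeGraph ends A).Reachable a b := by
    simpa [Spans] using h
  rw [kc, kc, edgeGraph_insert hab]
  have := SimpleGraph.card_connectedComponent_sup_edge_lt hr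
  have := (edgeGraph ends A).card_connectedComponent_le_sup_edge_add_one a b
  omega

theorem kc_le_kc_insert_add_one (A : Finset E) (f : E) :
    kc ends A ≤ kc ends (insert f A) + 1 := by
  obtain ⟨a, b, hab⟩ := (ends f).exists_eq_mk
  rw [kc, kc, edgeGraph_insert hab]
  exact (edgeGraph ends A).card_connectedComponent_le_sup_edge_add_one a b

theorem kc_le_kc_union_add_card (A S : Finset E) : kc ends A ≤ kc ends (A ∪ S) + S.card := by
  induction S using Finset.induction with
  | empty => simp
  | insert x S hx ih =>
    have := kc_le_kc_insert_add_one (ends := ends) (A ∪ S) x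
    rw [union_insert, card_insert_of_notMem hx]
    omega

end EdgeSubsets

section Forests

variable {V E : Type} [Fintype V] {ends : E → Sym2 V}

def IsForest (ends : E → Sym2 V) (A : Finset E) : Prop :=
  A.card + kc ends A = Fintype.card V

theorem IsSpanningForest.isForest [Fintype E] {B : Finset E} (hB : IsSpanningForest ends B) :
    IsForest ends B :=
  hB.1

theorem IsSpanningForest.card_add_kc_univ [Fintype E] {B : Finset E}
    (hB : IsSpanningForest ends B) : B.card + kc ends univ = Fintype.card V :=
  hB.2 ▸ hB.1

variable [DecidableEq E]

theorem IsForest.kc_sdiff {A S : Finset E} (hA : IsForest ends A) (hS : S ⊆ A) :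
    kc ends (A \ S) = kc ends A + S.card := by
  have h₁ := kc_le_kc_union_add_card (ends := ends) (A \ S) S
  have h₂ := kc_le_kc_union_add_card (ends := ends) ∅ (A \ S)
  rw [sdiff_union_of_subset hS] at h₁
  rw [kc_empty, empty_union, card_sdiff_of_subset hS] at h₂
  have := card_le_card hS
  unfold IsForest at hA
  omega

theorem IsForest.subset {A B : Finset E} (hA : IsForest ends A) (h : B ⊆ A) :
    IsForest ends B := by
  have hk := hA.kc_sdiff (sdiff_subset (s := A) (t := B))
  have hc := card_sdiff_add_card_eq_card h
  rw [Finset.sdiff_sdiff_eq_self h] at hk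
  unfold IsForest at hA ⊢
  omega

theorem IsForest.insert {A : Finset E} {f : E} (hA : IsForest ends A) (h : ¬Spans ends A f) :
    IsForest ends (insert f A) := by
  have := kc_insert_add_one_of_not_spans h
  have hf : f ∉ A := fun hf => h (spans_of_mem hf)
  unfold IsForest at hA ⊢
  rw [card_insert_of_notMem hf]
  omega

variable [Fintype E]

theorem IsSpanningForest.not_swapEdge {B : Finset E} {e f : E} (hB : IsSpanningForest ends B)
    (he : e ∈ B) (hf : Spans ends (B.erase e) f) :
    ¬IsSpanningForest ends (swapEdge B e f) := by
  intro h
  have h₁ : kc ends (swapEdge B e f) = kc ends (B.erase e) := kc_insert_of_spans hf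
  have h₂ := hB.isForest.kc_sdiff (singleton_subset_iff.2 he)
  rw [sdiff_singleton_eq_erase, card_singleton] at h₂
  have := h.2
  have := hB.2
  omega

theorem IsForest.exists_isSpanningForest {I S : Finset E} (hI : IsForest ends I) (hIS : I ⊆ S)
    (hS : kc ends S = kc ends univ) :
    ∃ B, IsSpanningForest ends B ∧ I ⊆ B ∧ B ⊆ S := by
  by_cases hk : kc ends I = kc ends univ
  · exact ⟨I, ⟨hI, hk⟩, subset_rfl, hIS⟩
  obtain ⟨e, heS, he⟩ : ∃ e ∈ S, ¬Spans ends I e := by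
    by_contra! h
    rw [← kc_union_of_spans h, union_eq_right.2 hIS] at hk
    exact hk hS
  have hdrop := kc_insert_add_one_of_not_spans he
  obtain ⟨B, hB, hIB, hBS⟩ := (hI.insert he).exists_isSpanningForest
    (insert_subset heS hIS) hS
  exact ⟨B, hB, (subset_insert e I).trans hIB, hBS⟩
termination_by kc ends I
decreasing_by omega

theorem IsSpanningForest.exists_swapEdge {B P : Finset E} {x : E} (hB : IsSpanningForest ends B)
    (hx : x ∉ B) (hP : ¬Spans ends (B ∩ P) x) :
    ∃ y ∈ B, y ∉ P ∧ IsSpanningForest ends (swapEdge B y x) := by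
  have hS : kc ends (insert x B) = kc ends univ :=
    le_antisymm (hB.2 ▸ kc_antitone (subset_insert x B))
      (kc_antitone (subset_univ _))
  obtain ⟨B', hB', hIB', hB'S⟩ := ((hB.isForest.subset inter_subset_left).insert hP
    ).exists_isSpanningForest (insert_subset_insert x inter_subset_left) hS
  have hxB' : x ∈ B' := hIB' (mem_insert_self _ _)
  have hcard : B'.card = B.card := by
    have := hB.card_add_kc_univ
    have := hB'.card_add_kc_univ
    omega
  obtain ⟨y, hyB, hyB'⟩ : ∃ y ∈ B, y ∉ B' := by
    by_contra! h
    have := card_le_card (insert_subset hxB' h)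
    rw [card_insert_of_notMem hx] at this
    omega
  have hswap : B' = swapEdge B y x := by
    refine eq_of_subset_of_card_le (fun z hz => ?_) ?_
    · rcases mem_insert.1 (hB'S hz) with rfl | hzB
      · exact mem_insert_self _ _
      · exact mem_insert_of_mem (mem_erase.2 ⟨by rintro rfl; exact hyB' hz, hzB⟩)
    · rw [swapEdge, card_insert_of_notMem (fun h => hx (mem_of_mem_erase h)),
        card_erase_of_mem hyB]
      have := card_pos.2 ⟨y, hyB⟩
      omega
  refine ⟨y, hyB, fun hyP => hyB' (hIB' ?_), hswap ▸ hB'⟩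
  exact mem_insert_of_mem (mem_inter.2 ⟨hyB, hyP⟩)

end Forests

section GreedyForest

variable {V E L : Type} [Fintype E] [LinearOrder L] {ends : E → Sym2 V} {κ : E → L}

noncomputable def earlier (κ : E → L) (x : E) : Finset E :=
  {y | κ y < κ x}

@[simp]
theorem mem_earlier {x y : E} : y ∈ earlier κ x ↔ κ y < κ x := by
  simp [earlier]

theorem earlier_subset_earlier {x y : E} (h : κ y < κ x) : earlier κ y ⊆ earlier κ x :=
  fun _ hz => mem_earlier.2 ((mem_earlier.1 hz).trans h)

/-- The greedy spanning forest for the edge order `κ`. Testing each edge against all earlier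
edges, rather than against the earlier kept ones, gives the same forest
(`spans_greedyForest_inter`) without a recursion. -/
noncomputable def greedyForest (ends : E → Sym2 V) (κ : E → L) : Finset E :=
  {x | ¬Spans ends (earlier κ x) x}

theorem mem_greedyForest {x : E} :
    x ∈ greedyForest ends κ ↔ ¬Spans ends (earlier κ x) x := by
  simp [greedyForest]

variable [DecidableEq E]

theorem spans_greedyForest_inter {x : E} (hx : x ∉ greedyForest ends κ) :
    Spans ends (greedyForest ends κ ∩ earlier κ x) x := by
  by_contra hbad
  obtain ⟨y, hy, hmin⟩ := exists_min_image
    {y | y ∉ greedyForest ends κ ∧ ¬Spans ends (greedyForest ends κ ∩ earlier κ y) y} κ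
    ⟨x, by simp [hx, hbad]⟩
  simp only [mem_filter, mem_univ, true_and] at hy hmin
  refine hy.2 (Spans.trans (fun z hz => ?_) (not_not.1 (mt mem_greedyForest.2 hy.1)))
  by_cases hzG : z ∈ greedyForest ends κ
  · exact spans_of_mem (mem_inter.2 ⟨hzG, hz⟩)
  · refine (of_not_not fun hz' => (hmin z ⟨hzG, hz'⟩).not_gt (mem_earlier.1 hz)).mono
      (inter_subset_inter_left (earlier_subset_earlier (mem_earlier.1 hz)))

theorem spans_greedyForest (x : E) : Spans ends (greedyForest ends κ) x := by
  by_cases hx : x ∈ greedyForest ends κ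
  · exact spans_of_mem hx
  · exact (spans_greedyForest_inter hx).mono inter_subset_left

variable [Fintype V]

theorem greedyForest_isSpanningForest (hκ : Function.Injective κ) :
    IsSpanningForest ends (greedyForest ends κ) := by
  have hforest : ∀ s ⊆ greedyForest ends κ, IsForest ends s := by
    intro s
    induction s using Finset.induction_on_max_value κ with
    | empty => intro _; simp [IsForest, kc_empty]
    | insert a s ha hmax ih =>
      intro hs
      refine (ih ((subset_insert a s).trans hs)).insert fun hspan =>
        mem_greedyForest.1 (hs (mem_insert_self a s)) (hspan.mono fun y hy => ?_)
      simpa using (hmax y hy).lt_of_ne (hκ.ne fun h => ha (h ▸ hy))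
  refine ⟨hforest _ subset_rfl, ?_⟩
  rw [← kc_union_of_spans (S := univ) fun x _ => spans_greedyForest x,
    union_eq_right.2 (subset_univ _)]

def IsExchangeMinimal (ends : E → Sym2 V) (κ : E → L) (B : Finset E) : Prop :=
  ∀ x ∉ B, ∀ y ∈ B, IsSpanningForest ends (swapEdge B y x) → κ y < κ x

theorem isExchangeMinimal_greedyForest (hκ : Function.Injective κ) :
    IsExchangeMinimal ends κ (greedyForest ends κ) := by
  intro x hx y hy hswap
  by_contra hyx
  refine (greedyForest_isSpanningForest hκ).not_swapEdge hy
    ((spans_greedyForest_inter hx).mono fun z hz => ?_) hswap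
  rw [mem_inter, mem_earlier] at hz
  exact mem_erase.2 ⟨by rintro rfl; exact hyx hz.2, hz.1⟩

theorem greedyForest_eq_of_isExchangeMinimal (hκ : Function.Injective κ) {B : Finset E}
    (hB : IsSpanningForest ends B) (hmin : IsExchangeMinimal ends κ B) :
    greedyForest ends κ = B := by
  have hsub : greedyForest ends κ ⊆ B := by
    intro x hxG
    by_contra hxB
    refine mem_greedyForest.1 hxG (Spans.mono (A := B ∩ earlier κ x) inter_subset_right ?_)
    by_contra hP
    obtain ⟨y, hyB, hyP, hswap⟩ := hB.exists_swapEdge hxB hP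
    exact hyP (by simpa using hmin x hxB y hyB hswap)
  refine eq_of_subset_of_card_le hsub (le_of_eq ?_)
  have := hB.card_add_kc_univ
  have := (greedyForest_isSpanningForest (ends := ends) hκ).card_add_kc_univ
  omega

end GreedyForest

section Activity

variable {V E : Type} [DecidableEq E] {ends : E → Sym2 V}

def activityKey (A : Finset E) (x : E) : E ⊕ₗ Eᵒᵈ :=
  if x ∈ A then toLex (.inl x) else toLex (.inr (OrderDual.toDual x))

theorem activityKey_injective (A : Finset E) : Function.Injective (activityKey A) := by
  intro x y h
  unfold activityKey at h
  split_ifs at h <;> simp_all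

variable [LinearOrder E]

theorem activityKey_lt_activityKey {A : Finset E} {x y : E} :
    activityKey A y < activityKey A x ↔
      if y ∈ A then x ∈ A → y < x else x ∉ A ∧ x < y := by
  unfold activityKey
  split_ifs <;> simp [*]

variable [Fintype V] [Fintype E]

theorem mem_intAct {B : Finset E} {e : E} : e ∈ intAct ends B ↔ InternallyActive ends B e := by
  simp [intAct]

theorem mem_extAct {B : Finset E} {f : E} : f ∈ extAct ends B ↔ ExternallyActive ends B f := by
  simp [extAct]

theorem isExchangeMinimal_activityKey_iff {A B : Finset E} :
    IsExchangeMinimal ends (activityKey A) B ↔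
      B \ intAct ends B ⊆ A ∧ A ⊆ B ∪ extAct ends B := by
  constructor
  · intro hmin
    refine ⟨fun y hy => ?_, fun x hxA => ?_⟩
    · obtain ⟨hyB, hyI⟩ := mem_sdiff.1 hy
      by_contra hyA
      refine hyI (mem_intAct.2 ⟨hyB, fun ⟨f, hfB, hyf, hswap⟩ => ?_⟩)
      have := activityKey_lt_activityKey.1 (hmin f hfB y hyB hswap)
      rw [if_neg hyA] at this
      exact lt_asymm hyf this.2
    · refine mem_union.2 (or_iff_not_imp_left.2 fun hxB =>
        mem_extAct.2 ⟨hxB, fun ⟨e, heB, hxe, hswap⟩ => ?_⟩)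
      have := activityKey_lt_activityKey.1 (hmin x hxB e heB hswap)
      split_ifs at this
      exacts [lt_asymm hxe (this hxA), this.1 hxA]
  · rintro ⟨hI, hX⟩ x hxB y hyB hswap
    have hxy : x ≠ y := by rintro rfl; exact hxB hyB
    have hyx : x ∈ A → y < x := fun hxA =>
      have hxX := (mem_union.1 (hX hxA)).resolve_left hxB
      (lt_or_gt_of_ne hxy).resolve_left fun hxy' => (mem_extAct.1 hxX).2 ⟨y, hyB, hxy', hswap⟩
    rw [activityKey_lt_activityKey]
    split_ifs with hyA
    · exact hyx
    · have hyI : y ∈ intAct ends B := by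
        by_contra hyI
        exact hyA (hI (mem_sdiff.2 ⟨hyB, hyI⟩))
      have hxy' : x < y := (lt_or_gt_of_ne hxy).resolve_right fun hyx' =>
        (mem_intAct.1 hyI).2 ⟨x, hxB, hyx', hswap⟩
      exact ⟨fun hxA => lt_asymm hxy' (hyx hxA), hxy'⟩

noncomputable def activityForest (ends : E → Sym2 V) (A : Finset E) : Finset E :=
  greedyForest ends (activityKey A)

theorem activityForest_eq_iff {A B : Finset E} :
    activityForest ends A = B ↔
      IsSpanningForest ends B ∧ A ∈ Finset.Icc (B \ intAct ends B) (B ∪ extAct ends B) := by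
  rw [mem_Icc, ← isExchangeMinimal_activityKey_iff]
  constructor
  · rintro rfl
    exact ⟨greedyForest_isSpanningForest (activityKey_injective A),
      isExchangeMinimal_greedyForest (activityKey_injective A)⟩
  · rintro ⟨hB, hmin⟩
    exact greedyForest_eq_of_isExchangeMinimal (activityKey_injective A) hB hmin

theorem IsSpanningForest.kc_of_mem_Icc {A B : Finset E} (hB : IsSpanningForest ends B)
    (hA : A ∈ Finset.Icc (B \ intAct ends B) (B ∪ extAct ends B)) :
    kc ends A = kc ends univ + (B \ A).card := by
  rw [mem_Icc] at hA
  have hspan : ∀ f ∈ A \ B, Spans ends (B ∩ A) f := by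
    intro f hf
    obtain ⟨hfA, hfB⟩ := mem_sdiff.1 hf
    have hfX := mem_extAct.1 ((mem_union.1 (hA.2 hfA)).resolve_left hfB)
    by_contra hns
    obtain ⟨y, hyB, hyA, hswap⟩ := hB.exists_swapEdge hfB hns
    have hyI : InternallyActive ends B y := by
      by_contra hyI
      exact hyA (hA.1 (mem_sdiff.2 ⟨hyB, mt mem_intAct.1 hyI⟩))
    rcases lt_or_gt_of_ne (show y ≠ f by rintro rfl; exact hfB hyB) with h | h
    exacts [hyI.2 ⟨f, hfB, h, hswap⟩, hfX.2 ⟨y, hyB, h, hswap⟩]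
  calc kc ends A = kc ends (B ∩ A ∪ A \ B) := by
        rw [union_comm, inter_comm, sdiff_union_inter]
    _ = kc ends (B \ (B \ A)) := by rw [kc_union_of_spans hspan, sdiff_sdiff_self_left]
    _ = kc ends univ + (B \ A).card := by
      rw [hB.isForest.kc_sdiff sdiff_subset, hB.2]

end Activity

section SignedSums

variable {α R : Type} [DecidableEq α] [CommRing R]

theorem sum_powerset_neg_one_pow_mul_pow_card_sdiff {I X : Finset α} (h : Disjoint I X)
    (x : R) :
    ∑ C ∈ (I ∪ X).powerset, (-1) ^ C.card * x ^ (I \ C).card =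
      (x - 1) ^ I.card * 0 ^ X.card := by
  have hterm : ∀ C ∈ (I ∪ X).powerset, (-1) ^ C.card * x ^ (I \ C).card =
      (∏ _i ∈ C, (-1 : R)) * ∏ i ∈ (I ∪ X) \ C, if i ∈ I then x else 1 := by
    intro C _
    rw [prod_const, prod_ite_mem, prod_const]
    congr 3
    ext i
    simp only [mem_inter, mem_sdiff, mem_union]
    tauto
  have hI : ∏ i ∈ I, (-1 + if i ∈ I then x else 1) = (x - 1) ^ I.card := by
    rw [prod_congr rfl fun i hi => by rw [if_pos hi, neg_add_eq_sub], prod_const]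
  have hX : ∏ i ∈ X, (-1 + if i ∈ I then x else 1) = 0 ^ X.card := by
    rw [prod_congr rfl fun i hi => by
      rw [if_neg (disjoint_right.1 h hi), neg_add_cancel], prod_const]
  rw [sum_congr rfl hterm, ← prod_add, prod_union h, hI, hX]

theorem sum_Icc_neg_one_pow_mul_pow_card_sdiff {B I X : Finset α} (hI : I ⊆ B)
    (hX : Disjoint B X) (x : R) :
    ∑ A ∈ Finset.Icc (B \ I) (B ∪ X), (-1) ^ A.card * x ^ (B \ A).card =
      (-1) ^ (B \ I).card * ((x - 1) ^ I.card * 0 ^ X.card) := by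
  have hIX : (B ∪ X) \ (B \ I) = I ∪ X := by
    ext i
    have : i ∈ I → i ∈ B := fun h => hI h
    have : i ∈ B → i ∉ X := fun h => disjoint_left.1 hX h
    simp only [mem_sdiff, mem_union]
    tauto
  have hdisj : ∀ C ∈ (I ∪ X).powerset, Disjoint (B \ I) C := fun C hC =>
    disjoint_of_subset_right (mem_powerset.1 hC)
      (disjoint_union_right.2 ⟨sdiff_disjoint, hX.mono_left sdiff_subset⟩)
  rw [Finset.Icc_eq_image_powerset (sdiff_subset.trans subset_union_left), hIX,
    sum_image fun C hC D hD h => by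
      rw [← union_sdiff_cancel_left (hdisj C hC), h,
        union_sdiff_cancel_left (hdisj D hD)],
    ← sum_powerset_neg_one_pow_mul_pow_card_sdiff (hX.mono_left hI), mul_sum]
  refine sum_congr rfl fun C hC => ?_
  have hBC : B \ (B \ I ∪ C) = I \ C := by
    ext i
    have : i ∈ I → i ∈ B := fun h => hI h
    have : i ∈ B → i ∉ X := fun h => disjoint_left.1 hX h
    have : i ∈ C → i ∈ I ∪ X := fun h => mem_powerset.1 hC h
    simp only [mem_sdiff, mem_union] at *
    tauto
  rw [card_union_of_disjoint (hdisj C hC), hBC, pow_add, mul_assoc]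

theorem neg_one_pow_mul_pow_mul_sub_one_pow {a b k v : ℕ}
    (h : a + b + k = v) (x : R) :
    (-1) ^ a * x ^ k * (x - 1) ^ b = (-1) ^ v * (-x) ^ k * (1 - x) ^ b := by
  have hk : ((-1 : R) ^ k) ^ 2 = 1 := by rw [← pow_mul, pow_mul', neg_one_sq, one_pow]
  rw [← h, neg_pow x, show x - 1 = -(1 - x) by ring, neg_pow (1 - x)]
  linear_combination (-(-1) ^ a * (-1) ^ b * x ^ k * (1 - x) ^ b) * hk

end SignedSums

section Colorings

variable {V E α : Type} [Fintype E] {ends : E → Sym2 V}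

noncomputable def monochromaticEdges (ends : E → Sym2 V) (c : V → α) : Finset E :=
  {e | ∃ a b, ends e = s(a, b) ∧ c a = c b}

theorem subset_monochromaticEdges_iff {A : Finset E} {c : V → α} :
    A ⊆ monochromaticEdges ends c ↔ ∀ u v, (edgeGraph ends A).Adj u v → c u = c v := by
  simp only [monochromaticEdges, subset_iff, mem_filter, mem_univ, true_and]
  constructor
  · rintro h u v ⟨-, e, he, hs⟩
    obtain ⟨a, b, hab, hc⟩ := h he
    rcases Sym2.eq_iff.1 (hab.symm.trans hs) with ⟨rfl, rfl⟩ | ⟨rfl, rfl⟩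
    exacts [hc, hc.symm]
  · intro h e he
    obtain ⟨a, b, hab⟩ := (ends e).exists_eq_mk
    refine ⟨a, b, hab, ?_⟩
    by_cases hne : a = b
    · rw [hne]
    · exact h a b ⟨hne, e, he, hab⟩

theorem card_subset_monochromaticEdges [Finite V] (A : Finset E) :
    Nat.card {c : V → α // A ⊆ monochromaticEdges ends c} = Nat.card α ^ kc ends A := by
  simp_rw [subset_monochromaticEdges_iff]
  exact SimpleGraph.card_fun_const_on_adj _

theorem chromCount_eq_sum_powerset [Fintype V] (ends : E → Sym2 V) (n : ℕ) :
    (chromCount ends n : ℤ) =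
      ∑ A ∈ (univ : Finset E).powerset, (-1) ^ A.card * (n : ℤ) ^ kc ends A := by
  have hproper : chromCount ends n =
      Nat.card {c : V → Fin n // monochromaticEdges ends c = ∅} := by
    refine Nat.card_congr (Equiv.subtypeEquivRight fun c => ?_)
    simp [monochromaticEdges, filter_eq_empty_iff]
  have hcount : ∀ A : Finset E, (n : ℤ) ^ kc ends A =
      ∑ c : V → Fin n, if A ⊆ monochromaticEdges ends c then 1 else 0 := by
    intro A
    rw [sum_boole, ← Fintype.card_subtype, ← Nat.card_eq_fintype_card,
      card_subset_monochromaticEdges, Nat.card_eq_fintype_card, Fintype.card_fin]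
    push_cast
    rfl
  calc (chromCount ends n : ℤ)
      = ∑ c : V → Fin n, ∑ A ∈ (monochromaticEdges ends c).powerset, (-1) ^ A.card := by
        simp only [hproper, sum_powerset_neg_one_pow_card, sum_boole,
          Nat.card_eq_fintype_card, Fintype.card_subtype]
    _ = ∑ c : V → Fin n, ∑ A ∈ (univ : Finset E).powerset,
          if A ⊆ monochromaticEdges ends c then (-1) ^ A.card else 0 := by
        refine sum_congr rfl fun c _ => ?_
        rw [← sum_filter]
        congr 1
        ext A
        simp
    _ = _ := by
        rw [sum_comm]
        refine sum_congr rfl fun A _ => ?_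
        rw [hcount, mul_sum]
        refine sum_congr rfl fun c _ => ?_
        split_ifs <;> simp

end Colorings

section Expansion

variable {V E : Type} [Fintype V] [Fintype E] [DecidableEq E] [LinearOrder E]
  {ends : E → Sym2 V}

theorem sum_activityForest_fiber {B : Finset E} (hB : IsSpanningForest ends B) (x : ℤ) :
    ∑ A ∈ (univ : Finset E).powerset with activityForest ends A = B,
        (-1) ^ A.card * x ^ kc ends A =
      if extAct ends B = ∅ then
        (-1) ^ Fintype.card V * (-x) ^ kc ends univ * (1 - x) ^ (intAct ends B).card
      else 0 := by
  have hfiber : {A ∈ (univ : Finset E).powerset | activityForest ends A = B} =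
      Finset.Icc (B \ intAct ends B) (B ∪ extAct ends B) := by
    ext A
    simp [activityForest_eq_iff, hB]
  have hIB : intAct ends B ⊆ B := fun e he => (mem_intAct.1 he).1
  have hBX : Disjoint B (extAct ends B) :=
    disjoint_right.2 fun f hf => (mem_extAct.1 hf).1
  rw [hfiber, sum_congr rfl fun A hA => by
      rw [hB.kc_of_mem_Icc hA, pow_add, mul_left_comm],
    ← mul_sum, sum_Icc_neg_one_pow_mul_pow_card_sdiff hIB hBX]
  split_ifs with hX
  · have := card_sdiff_add_card_eq_card hIB
    have := hB.card_add_kc_univ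
    rw [hX, card_empty, pow_zero, mul_one, ← mul_assoc, mul_comm (x ^ _)]
    exact neg_one_pow_mul_pow_mul_sub_one_pow (by omega) x
  · rw [zero_pow (card_ne_zero.2 (nonempty_iff_ne_empty.2 hX))]
    ring

end Expansion

/-- Spanning-forest representation of the chromatic polynomial:
`χ(G, n) = (−1)^{|V|} (−n)^{k(G)} ∑_{F : e(F)=0} (1 − n)^{i(F)}`. -/
theorem chromatic_spanning_forest {V E : Type} [Fintype V] [Fintype E] [DecidableEq E]
    [LinearOrder E] (ends : E → Sym2 V) (n : ℕ) :
    (chromCount ends n : ℤ) =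
      (-1) ^ Fintype.card V * (-(n : ℤ)) ^ kc ends (Finset.univ : Finset E) *
        ∑ F ∈ Finset.univ.powerset.filter
            (fun A => IsSpanningForest ends A ∧ extAct ends A = ∅),
          (1 - (n : ℤ)) ^ (intAct ends F).card := by
  have hmaps : ∀ A ∈ (univ : Finset E).powerset,
      activityForest ends A ∈ univ.powerset.filter (IsSpanningForest ends) := fun A _ =>
    mem_filter.2 ⟨mem_powerset.2 (subset_univ _),
      (activityForest_eq_iff.1 rfl).1⟩
  rw [chromCount_eq_sum_powerset, ← sum_fiberwise_of_maps_to hmaps,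
    sum_congr rfl fun B hB => sum_activityForest_fiber (mem_filter.1 hB).2 _,
    ← sum_filter, filter_filter, mul_sum]
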